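/- (Backward-in-time uniqueness.) Assume Ω is connected, and let (w₁, w₂, q₁, q₂) satisfy the homogeneous DPP difference system with the stated regularity and boundary-condition encodings (H1)–(H2). If w₁(x, T) = 0 and w₂(x, T) = 0 for every x ∈ Ω, then w₁(x, t) = 0 and w₂(x, t) = 0 for every x ∈ Ω and every t ∈ [0, T]; moreover, for each t ∈ [0, T] there is a constant C(t) such that q₁(x, t) = q₂(x, t) = C(t) for every x ∈ Ω. -/

import Mathlib

/-!
The energy `E(t) = ∫_Ω γ/(2φ₁)|w₁|² + γ/(2φ₂)|w₂|²` satisfies `E' = -D` with the dissipation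
`D(t) = ∫_Ω μ w₁·K₁⁻¹w₁ + μ w₂·K₂⁻¹w₂ + (β/μ)(q₁ - q₂)²`, and
`D' = -2 ∫_Ω γ/φ₁|∂ₜw₁|² + γ/φ₂|∂ₜw₂|²`: testing the momentum equations with `wᵢ` and `∂ₜwᵢ`,
the pressure terms become boundary terms, which vanish by (H1)–(H2). Cauchy–Schwarz then gives
`E'² ≤ E E''`, so `log E` is convex where `E > 0`, and `E` stays above
`E(t₀) exp((E'(t₀)/E(t₀)) (t - t₀))` up to its first zero after `t₀`. Hence `E(T) = 0` forces
`E ≡ 0`, i.e. `w₁ = w₂ = 0`. The momentum equation then gives `∇q₁ = 0`, so `q₁` is constant on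
the connected set `Ω`, and the mass equation gives `q₁ = q₂`.
-/

open Set MeasureTheory Matrix

/-- Divergence associated with a (spatial) Jacobian, i.e. the trace of the Fréchet
derivative of a vector field on ℝ³. -/
noncomputable def divOf (J : (Fin 3 → ℝ) →L[ℝ] (Fin 3 → ℝ)) : ℝ :=
  ∑ j : Fin 3, J (Pi.single j 1) j

/-- The continuous linear map `v ↦ g · v` associated with a gradient vector `g`;
`HasFDerivAt q (gradCLM g) x` says `g` is the spatial gradient of `q` at `x`. -/
noncomputable def gradCLM (g : Fin 3 → ℝ) : (Fin 3 → ℝ) →L[ℝ] ℝ :=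
  ∑ j : Fin 3, g j • (ContinuousLinearMap.proj j : (Fin 3 → ℝ) →L[ℝ] ℝ)

/-- The homogeneous double porosity/permeability (DPP) difference system on a bounded open
domain `Ω ⊆ ℝ³` and time interval `[0,T]`, together with all the regularity assumptions and
the boundary-condition encodings (H1)–(H2) described in the paper.

Fields `w₁, w₂` (velocity differences) and `q₁, q₂` (pressure differences) satisfy
`(γ/φᵢ) ∂wᵢ/∂t + μ Kᵢ⁻¹ wᵢ + ∇qᵢ = 0`, `div w₁ = −(β/μ)(q₁−q₂)`, `div w₂ = +(β/μ)(q₁−q₂)`.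
The time derivatives `dwᵢ, dqᵢ`, the spatial gradients `gqᵢ`, and the spatial Jacobians
`Jwᵢ, Jdwᵢ` (whose traces are the divergences of `wᵢ` and of `∂wᵢ/∂t`) are carried as data,
tied to the fields by `HasDerivWithinAt`/`HasFDerivAt` hypotheses. The hypothesis `leibniz`
expresses that differentiation in `t` under the integral over `Ω` is valid (for continuous
bounded integrands with continuous bounded time derivatives). -/
structure DPP where
  Ω : Set (Fin 3 → ℝ)
  hΩopen : IsOpen Ω
  hΩbdd : Bornology.IsBounded Ω
  T : ℝ
  hT : 0 < T
  γ : ℝ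
  μ : ℝ
  β : ℝ
  hγ : 0 < γ
  hμ : 0 < μ
  hβ : 0 < β
  φ₁ : (Fin 3 → ℝ) → ℝ
  φ₂ : (Fin 3 → ℝ) → ℝ
  hφ₁pos : ∀ x ∈ Ω, 0 < φ₁ x
  hφ₂pos : ∀ x ∈ Ω, 0 < φ₂ x
  hφ₁cont : ContinuousOn φ₁ Ω
  hφ₂cont : ContinuousOn φ₂ Ω
  hφ₁bdd : ∃ c > (0:ℝ), ∃ C : ℝ, ∀ x ∈ Ω, c ≤ φ₁ x ∧ φ₁ x ≤ C
  hφ₂bdd : ∃ c > (0:ℝ), ∃ C : ℝ, ∀ x ∈ Ω, c ≤ φ₂ x ∧ φ₂ x ≤ C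
  K₁ : (Fin 3 → ℝ) → Matrix (Fin 3) (Fin 3) ℝ
  K₂ : (Fin 3 → ℝ) → Matrix (Fin 3) (Fin 3) ℝ
  hK₁symm : ∀ x ∈ Ω, (K₁ x).IsSymm
  hK₂symm : ∀ x ∈ Ω, (K₂ x).IsSymm
  hK₁pd : ∀ x ∈ Ω, (K₁ x).PosDef
  hK₂pd : ∀ x ∈ Ω, (K₂ x).PosDef
  hK₁invcont : ∀ i j, ContinuousOn (fun x => (K₁ x)⁻¹ i j) Ω
  hK₂invcont : ∀ i j, ContinuousOn (fun x => (K₂ x)⁻¹ i j) Ω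
  hK₁invbdd : ∃ C : ℝ, ∀ x ∈ Ω, ∀ i j, |(K₁ x)⁻¹ i j| ≤ C
  hK₂invbdd : ∃ C : ℝ, ∀ x ∈ Ω, ∀ i j, |(K₂ x)⁻¹ i j| ≤ C
  -- the fields of the difference system
  w₁ : (Fin 3 → ℝ) → ℝ → (Fin 3 → ℝ)
  w₂ : (Fin 3 → ℝ) → ℝ → (Fin 3 → ℝ)
  q₁ : (Fin 3 → ℝ) → ℝ → ℝ
  q₂ : (Fin 3 → ℝ) → ℝ → ℝ
  -- derivative data: time derivatives, spatial gradients, spatial Jacobians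
  dw₁ : (Fin 3 → ℝ) → ℝ → (Fin 3 → ℝ)
  dw₂ : (Fin 3 → ℝ) → ℝ → (Fin 3 → ℝ)
  dq₁ : (Fin 3 → ℝ) → ℝ → ℝ
  dq₂ : (Fin 3 → ℝ) → ℝ → ℝ
  gq₁ : (Fin 3 → ℝ) → ℝ → (Fin 3 → ℝ)
  gq₂ : (Fin 3 → ℝ) → ℝ → (Fin 3 → ℝ)
  Jw₁ : (Fin 3 → ℝ) → ℝ → ((Fin 3 → ℝ) →L[ℝ] (Fin 3 → ℝ))
  Jw₂ : (Fin 3 → ℝ) → ℝ → ((Fin 3 → ℝ) →L[ℝ] (Fin 3 → ℝ))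
  Jdw₁ : (Fin 3 → ℝ) → ℝ → ((Fin 3 → ℝ) →L[ℝ] (Fin 3 → ℝ))
  Jdw₂ : (Fin 3 → ℝ) → ℝ → ((Fin 3 → ℝ) →L[ℝ] (Fin 3 → ℝ))
  -- C¹ regularity in time: the data are the actual derivatives
  hdw₁ : ∀ x ∈ Ω, ∀ t ∈ Icc (0:ℝ) T, HasDerivWithinAt (w₁ x) (dw₁ x t) (Icc (0:ℝ) T) t
  hdw₂ : ∀ x ∈ Ω, ∀ t ∈ Icc (0:ℝ) T, HasDerivWithinAt (w₂ x) (dw₂ x t) (Icc (0:ℝ) T) t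
  hdq₁ : ∀ x ∈ Ω, ∀ t ∈ Icc (0:ℝ) T, HasDerivWithinAt (q₁ x) (dq₁ x t) (Icc (0:ℝ) T) t
  hdq₂ : ∀ x ∈ Ω, ∀ t ∈ Icc (0:ℝ) T, HasDerivWithinAt (q₂ x) (dq₂ x t) (Icc (0:ℝ) T) t
  -- C¹ regularity in space: gradients and Jacobians
  hgq₁ : ∀ t ∈ Icc (0:ℝ) T, ∀ x ∈ Ω, HasFDerivAt (fun y => q₁ y t) (gradCLM (gq₁ x t)) x
  hgq₂ : ∀ t ∈ Icc (0:ℝ) T, ∀ x ∈ Ω, HasFDerivAt (fun y => q₂ y t) (gradCLM (gq₂ x t)) x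
  hJw₁ : ∀ t ∈ Icc (0:ℝ) T, ∀ x ∈ Ω, HasFDerivAt (fun y => w₁ y t) (Jw₁ x t) x
  hJw₂ : ∀ t ∈ Icc (0:ℝ) T, ∀ x ∈ Ω, HasFDerivAt (fun y => w₂ y t) (Jw₂ x t) x
  hJdw₁ : ∀ t ∈ Icc (0:ℝ) T, ∀ x ∈ Ω, HasFDerivAt (fun y => dw₁ y t) (Jdw₁ x t) x
  hJdw₂ : ∀ t ∈ Icc (0:ℝ) T, ∀ x ∈ Ω, HasFDerivAt (fun y => dw₂ y t) (Jdw₂ x t) x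
  -- `div (∂wᵢ/∂t) = ∂(div wᵢ)/∂t`
  hdivcomm₁ : ∀ x ∈ Ω, ∀ t ∈ Icc (0:ℝ) T,
    HasDerivWithinAt (fun s => divOf (Jw₁ x s)) (divOf (Jdw₁ x t)) (Icc (0:ℝ) T) t
  hdivcomm₂ : ∀ x ∈ Ω, ∀ t ∈ Icc (0:ℝ) T,
    HasDerivWithinAt (fun s => divOf (Jw₂ x s)) (divOf (Jdw₂ x t)) (Icc (0:ℝ) T) t
  -- joint continuity of the fields and of their appearing first derivatives
  hw₁cont : ContinuousOn (fun p : (Fin 3 → ℝ) × ℝ => w₁ p.1 p.2) (Ω ×ˢ Icc (0:ℝ) T)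
  hw₂cont : ContinuousOn (fun p : (Fin 3 → ℝ) × ℝ => w₂ p.1 p.2) (Ω ×ˢ Icc (0:ℝ) T)
  hq₁cont : ContinuousOn (fun p : (Fin 3 → ℝ) × ℝ => q₁ p.1 p.2) (Ω ×ˢ Icc (0:ℝ) T)
  hq₂cont : ContinuousOn (fun p : (Fin 3 → ℝ) × ℝ => q₂ p.1 p.2) (Ω ×ˢ Icc (0:ℝ) T)
  hdw₁cont : ContinuousOn (fun p : (Fin 3 → ℝ) × ℝ => dw₁ p.1 p.2) (Ω ×ˢ Icc (0:ℝ) T)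
  hdw₂cont : ContinuousOn (fun p : (Fin 3 → ℝ) × ℝ => dw₂ p.1 p.2) (Ω ×ˢ Icc (0:ℝ) T)
  hdq₁cont : ContinuousOn (fun p : (Fin 3 → ℝ) × ℝ => dq₁ p.1 p.2) (Ω ×ˢ Icc (0:ℝ) T)
  hdq₂cont : ContinuousOn (fun p : (Fin 3 → ℝ) × ℝ => dq₂ p.1 p.2) (Ω ×ˢ Icc (0:ℝ) T)
  hgq₁cont : ContinuousOn (fun p : (Fin 3 → ℝ) × ℝ => gq₁ p.1 p.2) (Ω ×ˢ Icc (0:ℝ) T)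
  hgq₂cont : ContinuousOn (fun p : (Fin 3 → ℝ) × ℝ => gq₂ p.1 p.2) (Ω ×ˢ Icc (0:ℝ) T)
  hdivw₁cont : ContinuousOn (fun p : (Fin 3 → ℝ) × ℝ => divOf (Jw₁ p.1 p.2)) (Ω ×ˢ Icc (0:ℝ) T)
  hdivw₂cont : ContinuousOn (fun p : (Fin 3 → ℝ) × ℝ => divOf (Jw₂ p.1 p.2)) (Ω ×ˢ Icc (0:ℝ) T)
  hdivdw₁cont : ContinuousOn (fun p : (Fin 3 → ℝ) × ℝ => divOf (Jdw₁ p.1 p.2)) (Ω ×ˢ Icc (0:ℝ) T)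
  hdivdw₂cont : ContinuousOn (fun p : (Fin 3 → ℝ) × ℝ => divOf (Jdw₂ p.1 p.2)) (Ω ×ˢ Icc (0:ℝ) T)
  -- boundedness of the fields and of their appearing first derivatives
  hw₁bdd : ∃ C : ℝ, ∀ x ∈ Ω, ∀ t ∈ Icc (0:ℝ) T, ‖w₁ x t‖ ≤ C
  hw₂bdd : ∃ C : ℝ, ∀ x ∈ Ω, ∀ t ∈ Icc (0:ℝ) T, ‖w₂ x t‖ ≤ C
  hq₁bdd : ∃ C : ℝ, ∀ x ∈ Ω, ∀ t ∈ Icc (0:ℝ) T, |q₁ x t| ≤ C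
  hq₂bdd : ∃ C : ℝ, ∀ x ∈ Ω, ∀ t ∈ Icc (0:ℝ) T, |q₂ x t| ≤ C
  hdw₁bdd : ∃ C : ℝ, ∀ x ∈ Ω, ∀ t ∈ Icc (0:ℝ) T, ‖dw₁ x t‖ ≤ C
  hdw₂bdd : ∃ C : ℝ, ∀ x ∈ Ω, ∀ t ∈ Icc (0:ℝ) T, ‖dw₂ x t‖ ≤ C
  hdq₁bdd : ∃ C : ℝ, ∀ x ∈ Ω, ∀ t ∈ Icc (0:ℝ) T, |dq₁ x t| ≤ C
  hdq₂bdd : ∃ C : ℝ, ∀ x ∈ Ω, ∀ t ∈ Icc (0:ℝ) T, |dq₂ x t| ≤ C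
  hgq₁bdd : ∃ C : ℝ, ∀ x ∈ Ω, ∀ t ∈ Icc (0:ℝ) T, ‖gq₁ x t‖ ≤ C
  hgq₂bdd : ∃ C : ℝ, ∀ x ∈ Ω, ∀ t ∈ Icc (0:ℝ) T, ‖gq₂ x t‖ ≤ C
  hdivw₁bdd : ∃ C : ℝ, ∀ x ∈ Ω, ∀ t ∈ Icc (0:ℝ) T, |divOf (Jw₁ x t)| ≤ C
  hdivw₂bdd : ∃ C : ℝ, ∀ x ∈ Ω, ∀ t ∈ Icc (0:ℝ) T, |divOf (Jw₂ x t)| ≤ C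
  hdivdw₁bdd : ∃ C : ℝ, ∀ x ∈ Ω, ∀ t ∈ Icc (0:ℝ) T, |divOf (Jdw₁ x t)| ≤ C
  hdivdw₂bdd : ∃ C : ℝ, ∀ x ∈ Ω, ∀ t ∈ Icc (0:ℝ) T, |divOf (Jdw₂ x t)| ≤ C
  -- the homogeneous DPP difference system
  pde₁ : ∀ x ∈ Ω, ∀ t ∈ Icc (0:ℝ) T,
    (γ / φ₁ x) • dw₁ x t + μ • ((K₁ x)⁻¹ *ᵥ w₁ x t) + gq₁ x t = 0
  pde₂ : ∀ x ∈ Ω, ∀ t ∈ Icc (0:ℝ) T,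
    (γ / φ₂ x) • dw₂ x t + μ • ((K₂ x)⁻¹ *ᵥ w₂ x t) + gq₂ x t = 0
  mass₁ : ∀ x ∈ Ω, ∀ t ∈ Icc (0:ℝ) T, divOf (Jw₁ x t) = -(β / μ) * (q₁ x t - q₂ x t)
  mass₂ : ∀ x ∈ Ω, ∀ t ∈ Icc (0:ℝ) T, divOf (Jw₂ x t) = (β / μ) * (q₁ x t - q₂ x t)
  -- boundary-condition encodings (H1)–(H2)
  H1₁ : ∀ t ∈ Icc (0:ℝ) T,
    (∫ x in Ω, (w₁ x t ⬝ᵥ gq₁ x t + q₁ x t * divOf (Jw₁ x t))) = 0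
  H1₂ : ∀ t ∈ Icc (0:ℝ) T,
    (∫ x in Ω, (w₂ x t ⬝ᵥ gq₂ x t + q₂ x t * divOf (Jw₂ x t))) = 0
  H2₁ : ∀ t ∈ Icc (0:ℝ) T,
    (∫ x in Ω, (dw₁ x t ⬝ᵥ gq₁ x t + q₁ x t * divOf (Jdw₁ x t))) = 0
  H2₂ : ∀ t ∈ Icc (0:ℝ) T,
    (∫ x in Ω, (dw₂ x t ⬝ᵥ gq₂ x t + q₂ x t * divOf (Jdw₂ x t))) = 0
  -- differentiation in `t` under the integral over `Ω` is valid
  leibniz : ∀ F F' : (Fin 3 → ℝ) → ℝ → ℝ,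
    (∀ x ∈ Ω, ∀ t ∈ Icc (0:ℝ) T, HasDerivWithinAt (F x) (F' x t) (Icc (0:ℝ) T) t) →
    ContinuousOn (fun p : (Fin 3 → ℝ) × ℝ => F p.1 p.2) (Ω ×ˢ Icc (0:ℝ) T) →
    ContinuousOn (fun p : (Fin 3 → ℝ) × ℝ => F' p.1 p.2) (Ω ×ˢ Icc (0:ℝ) T) →
    (∃ C : ℝ, ∀ x ∈ Ω, ∀ t ∈ Icc (0:ℝ) T, |F x t| ≤ C) →
    (∃ C : ℝ, ∀ x ∈ Ω, ∀ t ∈ Icc (0:ℝ) T, |F' x t| ≤ C) →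
    ∀ t ∈ Icc (0:ℝ) T,
      HasDerivWithinAt (fun s => ∫ x in Ω, F x s) (∫ x in Ω, F' x t) (Icc (0:ℝ) T) t

/-- The (kinetic) energy `E(t) = ∫_Ω [ γ/(2φ₁) |w₁|² + γ/(2φ₂) |w₂|² ] dx` of the
difference system. -/
noncomputable def DPP.E (S : DPP) : ℝ → ℝ := fun t =>
  ∫ x in S.Ω, ((S.γ / (2 * S.φ₁ x)) * (S.w₁ x t ⬝ᵥ S.w₁ x t)
    + (S.γ / (2 * S.φ₂ x)) * (S.w₂ x t ⬝ᵥ S.w₂ x t))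

section LogConvex

variable {f g r : ℝ → ℝ} {a b : ℝ}

lemma monotoneOn_div_of_sq_le_mul
    (hf : ∀ u ∈ Icc a b, HasDerivWithinAt f (g u) (Icc a b) u)
    (hg : ∀ u ∈ Icc a b, HasDerivWithinAt g (r u) (Icc a b) u)
    (hpos : ∀ u ∈ Icc a b, 0 < f u) (hcs : ∀ u ∈ Icc a b, g u ^ 2 ≤ f u * r u) :
    MonotoneOn (fun u => g u / f u) (Icc a b) := by
  have hderiv : ∀ u ∈ Icc a b, HasDerivWithinAt (fun u => g u / f u)
      ((r u * f u - g u * g u) / f u ^ 2) (Icc a b) u :=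
    fun u hu => (hg u hu).div (hf u hu) (hpos u hu).ne'
  refine monotoneOn_of_hasDerivWithinAt_nonneg (convex_Icc a b)
    (fun u hu => (hderiv u hu).continuousWithinAt)
    (fun u hu => (hderiv u (interior_subset hu)).mono interior_subset) fun u hu => ?_
  have hu := interior_subset hu
  exact div_nonneg (by nlinarith [hcs u hu]) (sq_nonneg _)

lemma monotoneOn_mul_exp_neg_of_mul_le {m : ℝ}
    (hf : ∀ u ∈ Icc a b, HasDerivWithinAt f (g u) (Icc a b) u)
    (hm : ∀ u ∈ Icc a b, m * f u ≤ g u) :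
    MonotoneOn (fun u => f u * Real.exp (-(m * u))) (Icc a b) := by
  have hderiv : ∀ u ∈ Icc a b, HasDerivWithinAt (fun u => f u * Real.exp (-(m * u)))
      ((g u - m * f u) * Real.exp (-(m * u))) (Icc a b) u := by
    intro u hu
    have hexp : HasDerivWithinAt (fun u => Real.exp (-(m * u))) (Real.exp (-(m * u)) * -m)
        (Icc a b) u := by
      simpa using (((hasDerivAt_id u).const_mul m).neg.exp).hasDerivWithinAt
    exact ((hf u hu).mul hexp).congr_deriv (by ring)
  refine monotoneOn_of_hasDerivWithinAt_nonneg (convex_Icc a b)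
    (fun u hu => (hderiv u hu).continuousWithinAt)
    (fun u hu => (hderiv u (interior_subset hu)).mono interior_subset) fun u hu => ?_
  exact mul_nonneg (sub_nonneg.2 (hm u (interior_subset hu))) (Real.exp_pos _).le

/-- Log-convexity: `log f` has increasing derivative `g / f`, so it lies above its tangent
at `a`. -/
lemma mul_exp_le_of_sq_le_mul (hab : a ≤ b)
    (hf : ∀ u ∈ Icc a b, HasDerivWithinAt f (g u) (Icc a b) u)
    (hg : ∀ u ∈ Icc a b, HasDerivWithinAt g (r u) (Icc a b) u)
    (hpos : ∀ u ∈ Icc a b, 0 < f u) (hcs : ∀ u ∈ Icc a b, g u ^ 2 ≤ f u * r u) :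
    f a * Real.exp (g a / f a * (b - a)) ≤ f b := by
  set m := g a / f a
  have hslope : ∀ u ∈ Icc a b, m * f u ≤ g u := fun u hu =>
    (le_div_iff₀ (hpos u hu)).1
      (monotoneOn_div_of_sq_le_mul hf hg hpos hcs (left_mem_Icc.2 hab) hu hu.1)
  have hmono := monotoneOn_mul_exp_neg_of_mul_le hf hslope (left_mem_Icc.2 hab)
    (right_mem_Icc.2 hab) hab
  have := mul_le_mul_of_nonneg_right hmono (Real.exp_pos (m * b)).le
  simp only [mul_assoc, ← Real.exp_add, neg_add_cancel, Real.exp_zero, mul_one] at this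
  rwa [show m * (b - a) = -(m * a) + m * b by ring]

theorem eqOn_zero_of_sq_deriv_le_mul
    (hf : ∀ u ∈ Icc a b, HasDerivWithinAt f (g u) (Icc a b) u)
    (hg : ∀ u ∈ Icc a b, HasDerivWithinAt g (r u) (Icc a b) u)
    (hf0 : ∀ u ∈ Icc a b, 0 ≤ f u) (hcs : ∀ u ∈ Icc a b, g u ^ 2 ≤ f u * r u)
    (hfb : f b = 0) : EqOn f 0 (Icc a b) := by
  intro t₀ ht₀
  by_contra hne
  have hft₀ : 0 < f t₀ := (hf0 t₀ ht₀).lt_of_ne' hne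
  have hfc : ContinuousOn f (Icc a b) := fun u hu => (hf u hu).continuousWithinAt
  -- `t₁` is the first zero of `f` after `t₀`
  set Z := Icc t₀ b ∩ f ⁻¹' {0}
  have hZ : IsClosed Z := (hfc.mono (Icc_subset_Icc_left ht₀.1)).preimage_isClosed_of_isClosed
    isClosed_Icc isClosed_singleton
  have hbZ : b ∈ Z := ⟨right_mem_Icc.2 ht₀.2, hfb⟩
  have hZbdd : BddBelow Z := ⟨t₀, fun s hs => hs.1.1⟩
  set t₁ := sInf Z
  have ht₁Z : t₁ ∈ Z := hZ.csInf_mem ⟨b, hbZ⟩ hZbdd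
  have ht₀t₁ : t₀ < t₁ := ht₁Z.1.1.lt_of_ne fun h => hne (h ▸ ht₁Z.2)
  have hsub : Icc t₀ t₁ ⊆ Icc a b := Icc_subset_Icc ht₀.1 ht₁Z.1.2
  have hpos : ∀ s ∈ Ico t₀ t₁, 0 < f s := fun s hs =>
    (hf0 s (hsub (Ico_subset_Icc_self hs))).lt_of_ne' fun h =>
      (csInf_le hZbdd ⟨⟨hs.1, hs.2.le.trans ht₁Z.1.2⟩, h⟩).not_gt hs.2
  have hlower : ∀ s ∈ Ico t₀ t₁, f t₀ * Real.exp (g t₀ / f t₀ * (s - t₀)) ≤ f s := by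
    intro s hs
    have hsub' : Icc t₀ s ⊆ Icc a b := (Icc_subset_Icc_right hs.2.le).trans hsub
    exact mul_exp_le_of_sq_le_mul hs.1 (fun u hu => (hf u (hsub' hu)).mono hsub')
      (fun u hu => (hg u (hsub' hu)).mono hsub') (fun u hu => hpos u ⟨hu.1, hu.2.trans_lt hs.2⟩)
      (fun u hu => hcs u (hsub' hu))
  have hclosure : closure (Ico t₀ t₁) = Icc t₀ t₁ := closure_Ico ht₀t₁.ne
  have := le_on_closure hlower (by rw [hclosure]; fun_prop) (by rw [hclosure]; exact hfc.mono hsub)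
    (by rw [hclosure]; exact right_mem_Icc.2 ht₀t₁.le)
  rw [ht₁Z.2] at this
  exact (mul_pos hft₀ (Real.exp_pos _)).not_ge this

end LogConvex

section CauchySchwarz

variable {α : Type*} [MeasurableSpace α] {μ : Measure α}

lemma sq_integral_le_integral_mul_integral {a b c : α → ℝ} (ha : Integrable a μ)
    (hb : Integrable b μ) (hc : Integrable c μ)
    (h : ∀ l : ℝ, ∀ᵐ x ∂μ, 0 ≤ a x * (l * l) + 2 * b x * l + c x) :
    (∫ x, b x ∂μ) ^ 2 ≤ (∫ x, a x ∂μ) * ∫ x, c x ∂μ := by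
  have hquad : ∀ l : ℝ, 0 ≤ (∫ x, a x ∂μ) * (l * l) + 2 * (∫ x, b x ∂μ) * l + ∫ x, c x ∂μ := by
    intro l
    have hsplit : ∫ x, (a x * (l * l) + 2 * b x * l + c x) ∂μ
        = (∫ x, a x ∂μ) * (l * l) + 2 * (∫ x, b x ∂μ) * l + ∫ x, c x ∂μ := by
      rw [integral_add (f := fun x => a x * (l * l) + 2 * b x * l)
          ((ha.mul_const _).add ((hb.const_mul 2).mul_const l)) hc,
        integral_add (ha.mul_const _) ((hb.const_mul 2).mul_const l), integral_mul_const,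
        integral_mul_const, integral_const_mul]
    exact hsplit ▸ integral_nonneg_of_ae (h l)
  have := discrim_le_zero hquad
  rw [discrim] at this
  linarith

end CauchySchwarz

section Calculus

variable {ι : Type*} [Fintype ι] {s : Set ℝ} {t : ℝ} {u v : ℝ → ι → ℝ} {u' v' : ι → ℝ}

lemma HasDerivWithinAt.dotProduct (hu : HasDerivWithinAt u u' s t)
    (hv : HasDerivWithinAt v v' s t) :
    HasDerivWithinAt (fun τ => u τ ⬝ᵥ v τ) (u' ⬝ᵥ v t + u t ⬝ᵥ v') s t := by
  simp only [_root_.dotProduct, ← Finset.sum_add_distrib]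
  exact HasDerivWithinAt.fun_sum fun i _ =>
    (hasDerivWithinAt_pi.1 hu i).mul (hasDerivWithinAt_pi.1 hv i)

lemma HasDerivWithinAt.const_mulVec {m : Type*} (M : Matrix m ι ℝ)
    (hv : HasDerivWithinAt v v' s t) : HasDerivWithinAt (fun τ => M *ᵥ v τ) (M *ᵥ v') s t :=
  hasDerivWithinAt_pi.2 fun i =>
    ((hasDerivWithinAt_const t s (M i)).dotProduct hv).congr_deriv (by simp [mulVec])

end Calculus

lemma Matrix.IsSymm.dotProduct_mulVec_comm {n : Type*} [Fintype n] {M : Matrix n n ℝ}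
    (hM : M.IsSymm) (u v : n → ℝ) : u ⬝ᵥ (M *ᵥ v) = v ⬝ᵥ (M *ᵥ u) := by
  rw [dotProduct_mulVec, ← mulVec_transpose, hM.eq, dotProduct_comm]

lemma mul_dotProduct_self_nonneg {n : Type*} [Fintype n] {c : ℝ} (hc : 0 ≤ c) (v : n → ℝ) :
    0 ≤ c * (v ⬝ᵥ v) :=
  mul_nonneg hc (by simpa using dotProduct_star_self_nonneg v)

section BoundedContinuousOn

variable {α : Type*} [TopologicalSpace α]

def boundedContinuousOn (A : Set α) : Subalgebra ℝ (α → ℝ) where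
  carrier := {F | ContinuousOn F A ∧ ∃ C, ∀ p ∈ A, |F p| ≤ C}
  mul_mem' := by
    rintro F G ⟨hF, CF, hCF⟩ ⟨hG, CG, hCG⟩
    refine ⟨hF.mul hG, CF * CG, fun p hp => ?_⟩
    rw [Pi.mul_apply, abs_mul]
    exact mul_le_mul (hCF p hp) (hCG p hp) (abs_nonneg _) ((abs_nonneg _).trans (hCF p hp))
  add_mem' := by
    rintro F G ⟨hF, CF, hCF⟩ ⟨hG, CG, hCG⟩
    exact ⟨hF.add hG, CF + CG, fun p hp =>
      (abs_add_le _ _).trans (add_le_add (hCF p hp) (hCG p hp))⟩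
  algebraMap_mem' c := ⟨continuousOn_const, |c|, fun _ _ => le_rfl⟩

variable {A : Set α}

lemma const_mem_boundedContinuousOn (c : ℝ) : (fun _ => c) ∈ boundedContinuousOn A :=
  (boundedContinuousOn A).algebraMap_mem c

lemma apply_mem_boundedContinuousOn {ι : Type*} [Fintype ι] {v : α → ι → ℝ} (hv : ContinuousOn v A)
    (hb : ∃ C, ∀ p ∈ A, ‖v p‖ ≤ C) (i : ι) : (fun p => v p i) ∈ boundedContinuousOn A := by
  obtain ⟨C, hC⟩ := hb
  exact ⟨(continuous_apply i).comp_continuousOn hv, C, fun p hp =>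
    (norm_le_pi_norm (v p) i).trans (hC p hp)⟩

lemma div_mem_boundedContinuousOn (c : ℝ) {F : α → ℝ} (hF : F ∈ boundedContinuousOn A)
    {δ : ℝ} (hδ : 0 < δ) (hFδ : ∀ p ∈ A, δ ≤ F p) :
    (fun p => c / F p) ∈ boundedContinuousOn A := by
  refine ⟨continuousOn_const.div hF.1 fun p hp => (hδ.trans_le (hFδ p hp)).ne', |c| / δ,
    fun p hp => ?_⟩
  have hFp := hδ.trans_le (hFδ p hp)
  rw [abs_div, abs_of_pos hFp]
  exact div_le_div_of_nonneg_left (abs_nonneg c) hδ (hFδ p hp)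

end BoundedContinuousOn

section DotProduct

variable {α ι : Type*} [Fintype ι] (R : Subalgebra ℝ (α → ℝ))

lemma Subalgebra.dotProduct_mem {u v : α → ι → ℝ} (hu : ∀ i, (fun p => u p i) ∈ R)
    (hv : ∀ i, (fun p => v p i) ∈ R) : (fun p => u p ⬝ᵥ v p) ∈ R := by
  have : (fun p => u p ⬝ᵥ v p) = ∑ i, (fun p => u p i) * (fun p => v p i) := by
    ext p; simp [dotProduct]
  rw [this]
  exact Subalgebra.sum_mem R fun i _ => R.mul_mem (hu i) (hv i)

lemma Subalgebra.mulVec_mem {M : α → Matrix ι ι ℝ} {v : α → ι → ℝ}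
    (hM : ∀ i j, (fun p => M p i j) ∈ R) (hv : ∀ j, (fun p => v p j) ∈ R) (i : ι) :
    (fun p => (M p *ᵥ v p) i) ∈ R :=
  R.dotProduct_mem (hM i) hv

end DotProduct

local notation "ℝ³" => Fin 3 → ℝ

noncomputable section

namespace DPP

variable (S : DPP)

/-- The integrands to which `leibniz` and bounded integrability over `Ω` apply. -/
abbrev regular : Subalgebra ℝ (ℝ³ × ℝ → ℝ) := boundedContinuousOn (S.Ω ×ˢ Icc 0 S.T)

lemma mem_regular {F : ℝ³ → ℝ → ℝ}
    (hc : ContinuousOn (fun p : ℝ³ × ℝ => F p.1 p.2) (S.Ω ×ˢ Icc 0 S.T))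
    (hb : ∃ C, ∀ x ∈ S.Ω, ∀ t ∈ Icc (0:ℝ) S.T, |F x t| ≤ C) :
    (fun p : ℝ³ × ℝ => F p.1 p.2) ∈ S.regular :=
  ⟨hc, hb.imp fun _ hC p hp => hC p.1 hp.1 p.2 hp.2⟩

lemma apply_mem_regular {v : ℝ³ → ℝ → ℝ³}
    (hc : ContinuousOn (fun p : ℝ³ × ℝ => v p.1 p.2) (S.Ω ×ˢ Icc 0 S.T))
    (hb : ∃ C, ∀ x ∈ S.Ω, ∀ t ∈ Icc (0:ℝ) S.T, ‖v x t‖ ≤ C) (i : Fin 3) :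
    (fun p : ℝ³ × ℝ => v p.1 p.2 i) ∈ S.regular :=
  apply_mem_boundedContinuousOn hc (hb.imp fun _ hC p hp => hC p.1 hp.1 p.2 hp.2) i

lemma entry_mem_regular {M : ℝ³ → Matrix (Fin 3) (Fin 3) ℝ}
    (hc : ∀ i j, ContinuousOn (fun x => M x i j) S.Ω)
    (hb : ∃ C, ∀ x ∈ S.Ω, ∀ i j, |M x i j| ≤ C) (i j : Fin 3) :
    (fun p : ℝ³ × ℝ => M p.1 i j) ∈ S.regular :=
  ⟨(hc i j).comp continuousOn_fst fun _ hp => hp.1, hb.imp fun _ hC p hp => hC p.1 hp.1 i j⟩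

lemma div_mem_regular (c : ℝ) {φ : ℝ³ → ℝ} (hc : ContinuousOn φ S.Ω)
    (hb : ∃ δ > (0:ℝ), ∃ C : ℝ, ∀ x ∈ S.Ω, δ ≤ φ x ∧ φ x ≤ C) :
    (fun p : ℝ³ × ℝ => c / φ p.1) ∈ S.regular := by
  obtain ⟨δ, hδ, C, hφ⟩ := hb
  refine div_mem_boundedContinuousOn c ⟨hc.comp continuousOn_fst fun _ hp => hp.1, C,
    fun p hp => ?_⟩ hδ fun p hp => (hφ p.1 hp.1).1
  rw [abs_of_pos (hδ.trans_le (hφ p.1 hp.1).1)]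
  exact (hφ p.1 hp.1).2

lemma continuousOn_of_mem {F : ℝ³ × ℝ → ℝ} (hF : F ∈ S.regular) {t : ℝ} (ht : t ∈ Icc 0 S.T) :
    ContinuousOn (fun x => F (x, t)) S.Ω :=
  hF.1.comp (continuousOn_id.prodMk continuousOn_const) fun _ hx => ⟨hx, ht⟩

lemma integrableOn_of_mem {F : ℝ³ × ℝ → ℝ} (hF : F ∈ S.regular) {t : ℝ} (ht : t ∈ Icc 0 S.T) :
    IntegrableOn (fun x => F (x, t)) S.Ω := by
  obtain ⟨C, hC⟩ := hF.2
  have hm := S.hΩopen.measurableSet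
  exact IntegrableOn.of_bound S.hΩbdd.measure_lt_top
    ((S.continuousOn_of_mem hF ht).aestronglyMeasurable hm) C
    (ae_restrict_of_forall_mem hm fun x hx => hC (x, t) ⟨hx, ht⟩)

lemma hasDerivWithinAt_integral {F F' : ℝ³ → ℝ → ℝ}
    (hF : (fun p : ℝ³ × ℝ => F p.1 p.2) ∈ S.regular)
    (hF' : (fun p : ℝ³ × ℝ => F' p.1 p.2) ∈ S.regular)
    (hd : ∀ x ∈ S.Ω, ∀ t ∈ Icc (0:ℝ) S.T, HasDerivWithinAt (F x) (F' x t) (Icc 0 S.T) t)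
    {t : ℝ} (ht : t ∈ Icc 0 S.T) :
    HasDerivWithinAt (fun s => ∫ x in S.Ω, F x s) (∫ x in S.Ω, F' x t) (Icc 0 S.T) t :=
  S.leibniz F F' hd hF.1 hF'.1 (hF.2.imp fun _ hC x hx s hs => hC (x, s) ⟨hx, hs⟩)
    (hF'.2.imp fun _ hC x hx s hs => hC (x, s) ⟨hx, hs⟩) t ht

def energyDensity (x : ℝ³) (t : ℝ) : ℝ :=
  S.γ / (2 * S.φ₁ x) * (S.w₁ x t ⬝ᵥ S.w₁ x t) + S.γ / (2 * S.φ₂ x) * (S.w₂ x t ⬝ᵥ S.w₂ x t)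

def powerDensity (x : ℝ³) (t : ℝ) : ℝ :=
  S.γ / S.φ₁ x * (S.w₁ x t ⬝ᵥ S.dw₁ x t) + S.γ / S.φ₂ x * (S.w₂ x t ⬝ᵥ S.dw₂ x t)

def accelerationDensity (x : ℝ³) (t : ℝ) : ℝ :=
  S.γ / S.φ₁ x * (S.dw₁ x t ⬝ᵥ S.dw₁ x t) + S.γ / S.φ₂ x * (S.dw₂ x t ⬝ᵥ S.dw₂ x t)

def dissipationDensity (x : ℝ³) (t : ℝ) : ℝ :=
  S.μ * (S.w₁ x t ⬝ᵥ ((S.K₁ x)⁻¹ *ᵥ S.w₁ x t)) + S.μ * (S.w₂ x t ⬝ᵥ ((S.K₂ x)⁻¹ *ᵥ S.w₂ x t))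
    + S.β / S.μ * ((S.q₁ x t - S.q₂ x t) * (S.q₁ x t - S.q₂ x t))

def dissipationRateDensity (x : ℝ³) (t : ℝ) : ℝ :=
  2 * S.μ * (S.dw₁ x t ⬝ᵥ ((S.K₁ x)⁻¹ *ᵥ S.w₁ x t))
    + 2 * S.μ * (S.dw₂ x t ⬝ᵥ ((S.K₂ x)⁻¹ *ᵥ S.w₂ x t))
    + 2 * (S.β / S.μ) * ((S.q₁ x t - S.q₂ x t) * (S.dq₁ x t - S.dq₂ x t))

def dissipation (t : ℝ) : ℝ := ∫ x in S.Ω, S.dissipationDensity x t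

lemma energyDensity_mem : (fun p : ℝ³ × ℝ => S.energyDensity p.1 p.2) ∈ S.regular := by
  have h₁ := S.apply_mem_regular S.hw₁cont S.hw₁bdd
  have h₂ := S.apply_mem_regular S.hw₂cont S.hw₂bdd
  have hφ₁ := S.div_mem_regular (S.γ / 2) S.hφ₁cont S.hφ₁bdd
  have hφ₂ := S.div_mem_regular (S.γ / 2) S.hφ₂cont S.hφ₂bdd
  simp only [div_div] at hφ₁ hφ₂
  exact add_mem (mul_mem hφ₁ (S.regular.dotProduct_mem h₁ h₁))
    (mul_mem hφ₂ (S.regular.dotProduct_mem h₂ h₂))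

lemma powerDensity_mem : (fun p : ℝ³ × ℝ => S.powerDensity p.1 p.2) ∈ S.regular :=
  add_mem
    (mul_mem (S.div_mem_regular S.γ S.hφ₁cont S.hφ₁bdd) (S.regular.dotProduct_mem
      (S.apply_mem_regular S.hw₁cont S.hw₁bdd) (S.apply_mem_regular S.hdw₁cont S.hdw₁bdd)))
    (mul_mem (S.div_mem_regular S.γ S.hφ₂cont S.hφ₂bdd) (S.regular.dotProduct_mem
      (S.apply_mem_regular S.hw₂cont S.hw₂bdd) (S.apply_mem_regular S.hdw₂cont S.hdw₂bdd)))

lemma accelerationDensity_mem :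
    (fun p : ℝ³ × ℝ => S.accelerationDensity p.1 p.2) ∈ S.regular := by
  have h₁ := S.apply_mem_regular S.hdw₁cont S.hdw₁bdd
  have h₂ := S.apply_mem_regular S.hdw₂cont S.hdw₂bdd
  exact add_mem
    (mul_mem (S.div_mem_regular S.γ S.hφ₁cont S.hφ₁bdd) (S.regular.dotProduct_mem h₁ h₁))
    (mul_mem (S.div_mem_regular S.γ S.hφ₂cont S.hφ₂bdd) (S.regular.dotProduct_mem h₂ h₂))

lemma dissipationDensity_mem :
    (fun p : ℝ³ × ℝ => S.dissipationDensity p.1 p.2) ∈ S.regular := by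
  have h₁ := S.apply_mem_regular S.hw₁cont S.hw₁bdd
  have h₂ := S.apply_mem_regular S.hw₂cont S.hw₂bdd
  have hq := sub_mem (S.mem_regular S.hq₁cont S.hq₁bdd) (S.mem_regular S.hq₂cont S.hq₂bdd)
  exact add_mem (add_mem
    (mul_mem (const_mem_boundedContinuousOn S.μ) (S.regular.dotProduct_mem h₁
      (S.regular.mulVec_mem (S.entry_mem_regular S.hK₁invcont S.hK₁invbdd) h₁)))
    (mul_mem (const_mem_boundedContinuousOn S.μ) (S.regular.dotProduct_mem h₂
      (S.regular.mulVec_mem (S.entry_mem_regular S.hK₂invcont S.hK₂invbdd) h₂))))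
    (mul_mem (const_mem_boundedContinuousOn _) (mul_mem hq hq))

lemma dissipationRateDensity_mem :
    (fun p : ℝ³ × ℝ => S.dissipationRateDensity p.1 p.2) ∈ S.regular := by
  have h₁ := S.apply_mem_regular S.hw₁cont S.hw₁bdd
  have h₂ := S.apply_mem_regular S.hw₂cont S.hw₂bdd
  have hq := sub_mem (S.mem_regular S.hq₁cont S.hq₁bdd) (S.mem_regular S.hq₂cont S.hq₂bdd)
  have hdq := sub_mem (S.mem_regular S.hdq₁cont S.hdq₁bdd) (S.mem_regular S.hdq₂cont S.hdq₂bdd)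
  exact add_mem (add_mem
    (mul_mem (const_mem_boundedContinuousOn _) (S.regular.dotProduct_mem
      (S.apply_mem_regular S.hdw₁cont S.hdw₁bdd)
      (S.regular.mulVec_mem (S.entry_mem_regular S.hK₁invcont S.hK₁invbdd) h₁)))
    (mul_mem (const_mem_boundedContinuousOn _) (S.regular.dotProduct_mem
      (S.apply_mem_regular S.hdw₂cont S.hdw₂bdd)
      (S.regular.mulVec_mem (S.entry_mem_regular S.hK₂invcont S.hK₂invbdd) h₂))))
    (mul_mem (const_mem_boundedContinuousOn _) (mul_mem hq hdq))

variable {S} {x : ℝ³} {t : ℝ}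

lemma hasDerivWithinAt_energyDensity (hx : x ∈ S.Ω) (ht : t ∈ Icc 0 S.T) :
    HasDerivWithinAt (S.energyDensity x) (S.powerDensity x t) (Icc 0 S.T) t := by
  have h₁ := S.hdw₁ x hx t ht
  have h₂ := S.hdw₂ x hx t ht
  refine (((h₁.dotProduct h₁).const_mul _).add ((h₂.dotProduct h₂).const_mul _)).congr_deriv ?_
  have := (S.hφ₁pos x hx).ne'
  have := (S.hφ₂pos x hx).ne'
  rw [powerDensity, dotProduct_comm (S.dw₁ x t), dotProduct_comm (S.dw₂ x t)]
  field_simp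
  ring

lemma hasDerivWithinAt_dissipationDensity (hx : x ∈ S.Ω) (ht : t ∈ Icc 0 S.T) :
    HasDerivWithinAt (S.dissipationDensity x) (S.dissipationRateDensity x t) (Icc 0 S.T) t := by
  have h₁ := S.hdw₁ x hx t ht
  have h₂ := S.hdw₂ x hx t ht
  have hq := (S.hdq₁ x hx t ht).sub (S.hdq₂ x hx t ht)
  refine ((((h₁.dotProduct (h₁.const_mulVec _)).const_mul S.μ).add
    ((h₂.dotProduct (h₂.const_mulVec _)).const_mul S.μ)).add
    ((hq.mul hq).const_mul _)).congr_deriv ?_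
  rw [dissipationRateDensity, (S.hK₁symm x hx).inv.dotProduct_mulVec_comm (S.w₁ x t),
    (S.hK₂symm x hx).inv.dotProduct_mulVec_comm (S.w₂ x t), Pi.sub_apply]
  ring

lemma divOf_Jdw₁ (hx : x ∈ S.Ω) (ht : t ∈ Icc 0 S.T) :
    divOf (S.Jdw₁ x t) = -(S.β / S.μ) * (S.dq₁ x t - S.dq₂ x t) :=
  (uniqueDiffOn_Icc S.hT t ht).eq_deriv _ (S.hdivcomm₁ x hx t ht)
    ((((S.hdq₁ x hx t ht).sub (S.hdq₂ x hx t ht)).const_mul _).congr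
      (fun s hs => S.mass₁ x hx s hs) (S.mass₁ x hx t ht))

lemma divOf_Jdw₂ (hx : x ∈ S.Ω) (ht : t ∈ Icc 0 S.T) :
    divOf (S.Jdw₂ x t) = S.β / S.μ * (S.dq₁ x t - S.dq₂ x t) :=
  (uniqueDiffOn_Icc S.hT t ht).eq_deriv _ (S.hdivcomm₂ x hx t ht)
    ((((S.hdq₁ x hx t ht).sub (S.hdq₂ x hx t ht)).const_mul _).congr
      (fun s hs => S.mass₂ x hx s hs) (S.mass₂ x hx t ht))

lemma powerDensity_eq (hx : x ∈ S.Ω) (ht : t ∈ Icc 0 S.T) :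
    S.powerDensity x t = -(S.dissipationDensity x t
      + (S.w₁ x t ⬝ᵥ S.gq₁ x t + S.q₁ x t * divOf (S.Jw₁ x t))
      + (S.w₂ x t ⬝ᵥ S.gq₂ x t + S.q₂ x t * divOf (S.Jw₂ x t))) := by
  have h₁ := congrArg (S.w₁ x t ⬝ᵥ ·) (S.pde₁ x hx t ht)
  have h₂ := congrArg (S.w₂ x t ⬝ᵥ ·) (S.pde₂ x hx t ht)
  simp only [dotProduct_add, dotProduct_smul, smul_eq_mul, dotProduct_zero] at h₁ h₂
  rw [powerDensity, dissipationDensity, S.mass₁ x hx t ht, S.mass₂ x hx t ht]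
  linear_combination h₁ + h₂

lemma dissipationRateDensity_eq (hx : x ∈ S.Ω) (ht : t ∈ Icc 0 S.T) :
    S.dissipationRateDensity x t = -(2 * (S.accelerationDensity x t
      + (S.dw₁ x t ⬝ᵥ S.gq₁ x t + S.q₁ x t * divOf (S.Jdw₁ x t))
      + (S.dw₂ x t ⬝ᵥ S.gq₂ x t + S.q₂ x t * divOf (S.Jdw₂ x t)))) := by
  have h₁ := congrArg (S.dw₁ x t ⬝ᵥ ·) (S.pde₁ x hx t ht)
  have h₂ := congrArg (S.dw₂ x t ⬝ᵥ ·) (S.pde₂ x hx t ht)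
  simp only [dotProduct_add, dotProduct_smul, smul_eq_mul, dotProduct_zero] at h₁ h₂
  rw [dissipationRateDensity, accelerationDensity, divOf_Jdw₁ hx ht, divOf_Jdw₂ hx ht]
  linear_combination 2 * h₁ + 2 * h₂

lemma integral_powerDensity (ht : t ∈ Icc 0 S.T) :
    ∫ x in S.Ω, S.powerDensity x t = -S.dissipation t := by
  have iD : IntegrableOn (fun x => S.dissipationDensity x t) S.Ω :=
    S.integrableOn_of_mem S.dissipationDensity_mem ht
  have iB₁ : IntegrableOn (fun x => S.w₁ x t ⬝ᵥ S.gq₁ x t + S.q₁ x t * divOf (S.Jw₁ x t)) S.Ω :=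
    S.integrableOn_of_mem (add_mem (S.regular.dotProduct_mem
      (S.apply_mem_regular S.hw₁cont S.hw₁bdd) (S.apply_mem_regular S.hgq₁cont S.hgq₁bdd))
      (mul_mem (S.mem_regular S.hq₁cont S.hq₁bdd) (S.mem_regular S.hdivw₁cont S.hdivw₁bdd))) ht
  have iB₂ : IntegrableOn (fun x => S.w₂ x t ⬝ᵥ S.gq₂ x t + S.q₂ x t * divOf (S.Jw₂ x t)) S.Ω :=
    S.integrableOn_of_mem (add_mem (S.regular.dotProduct_mem
      (S.apply_mem_regular S.hw₂cont S.hw₂bdd) (S.apply_mem_regular S.hgq₂cont S.hgq₂bdd))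
      (mul_mem (S.mem_regular S.hq₂cont S.hq₂bdd) (S.mem_regular S.hdivw₂cont S.hdivw₂bdd))) ht
  rw [setIntegral_congr_fun S.hΩopen.measurableSet fun x hx => powerDensity_eq hx ht,
    integral_neg, integral_add (iD.fun_add iB₁) iB₂, integral_add iD iB₁, S.H1₁ t ht,
    S.H1₂ t ht, add_zero, add_zero, dissipation]

lemma integral_dissipationRateDensity (ht : t ∈ Icc 0 S.T) :
    ∫ x in S.Ω, S.dissipationRateDensity x t = -(2 * ∫ x in S.Ω, S.accelerationDensity x t) := by
  have iR : IntegrableOn (fun x => S.accelerationDensity x t) S.Ω :=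
    S.integrableOn_of_mem S.accelerationDensity_mem ht
  have iB₁ : IntegrableOn (fun x => S.dw₁ x t ⬝ᵥ S.gq₁ x t + S.q₁ x t * divOf (S.Jdw₁ x t)) S.Ω :=
    S.integrableOn_of_mem (add_mem (S.regular.dotProduct_mem
      (S.apply_mem_regular S.hdw₁cont S.hdw₁bdd) (S.apply_mem_regular S.hgq₁cont S.hgq₁bdd))
      (mul_mem (S.mem_regular S.hq₁cont S.hq₁bdd) (S.mem_regular S.hdivdw₁cont S.hdivdw₁bdd))) ht
  have iB₂ : IntegrableOn (fun x => S.dw₂ x t ⬝ᵥ S.gq₂ x t + S.q₂ x t * divOf (S.Jdw₂ x t)) S.Ω :=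
    S.integrableOn_of_mem (add_mem (S.regular.dotProduct_mem
      (S.apply_mem_regular S.hdw₂cont S.hdw₂bdd) (S.apply_mem_regular S.hgq₂cont S.hgq₂bdd))
      (mul_mem (S.mem_regular S.hq₂cont S.hq₂bdd) (S.mem_regular S.hdivdw₂cont S.hdivdw₂bdd))) ht
  rw [setIntegral_congr_fun S.hΩopen.measurableSet fun x hx => dissipationRateDensity_eq hx ht,
    integral_neg, integral_const_mul, integral_add (iR.fun_add iB₁) iB₂, integral_add iR iB₁,
    S.H2₁ t ht, S.H2₂ t ht, add_zero, add_zero]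

variable (S)

lemma hasDerivWithinAt_energy (ht : t ∈ Icc 0 S.T) :
    HasDerivWithinAt S.E (-S.dissipation t) (Icc 0 S.T) t :=
  integral_powerDensity ht ▸ S.hasDerivWithinAt_integral S.energyDensity_mem S.powerDensity_mem
    (fun _ hx _ hs => hasDerivWithinAt_energyDensity hx hs) ht

lemma hasDerivWithinAt_dissipation (ht : t ∈ Icc 0 S.T) :
    HasDerivWithinAt S.dissipation (-(2 * ∫ x in S.Ω, S.accelerationDensity x t)) (Icc 0 S.T) t :=
  integral_dissipationRateDensity ht ▸ S.hasDerivWithinAt_integral S.dissipationDensity_mem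
    S.dissipationRateDensity_mem (fun _ hx _ hs => hasDerivWithinAt_dissipationDensity hx hs) ht

variable {S}

lemma energyDensity_nonneg (hx : x ∈ S.Ω) : 0 ≤ S.energyDensity x t :=
  add_nonneg (mul_dotProduct_self_nonneg (by have := S.hφ₁pos x hx; have := S.hγ; positivity) _)
    (mul_dotProduct_self_nonneg (by have := S.hφ₂pos x hx; have := S.hγ; positivity) _)

lemma energyDensity_eq_zero_iff (hx : x ∈ S.Ω) :
    S.energyDensity x t = 0 ↔ S.w₁ x t = 0 ∧ S.w₂ x t = 0 := by
  have := S.hγ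
  have := S.hφ₁pos x hx
  have := S.hφ₂pos x hx
  have h₁ : S.γ / (2 * S.φ₁ x) ≠ 0 := by positivity
  have h₂ : S.γ / (2 * S.φ₂ x) ≠ 0 := by positivity
  rw [energyDensity, add_eq_zero_iff_of_nonneg (mul_dotProduct_self_nonneg (by positivity) _)
    (mul_dotProduct_self_nonneg (by positivity) _)]
  simp only [mul_eq_zero, h₁, h₂, false_or, dotProduct_self_eq_zero]

lemma quadratic_nonneg (hx : x ∈ S.Ω) (l : ℝ) :
    0 ≤ S.accelerationDensity x t * (l * l) + 2 * S.powerDensity x t * l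
      + 2 * S.energyDensity x t := by
  have := S.hγ
  have := S.hφ₁pos x hx
  have := S.hφ₂pos x hx
  have hsq : S.accelerationDensity x t * (l * l) + 2 * S.powerDensity x t * l
      + 2 * S.energyDensity x t
      = S.γ / S.φ₁ x * ((S.w₁ x t + l • S.dw₁ x t) ⬝ᵥ (S.w₁ x t + l • S.dw₁ x t))
        + S.γ / S.φ₂ x * ((S.w₂ x t + l • S.dw₂ x t) ⬝ᵥ (S.w₂ x t + l • S.dw₂ x t)) := by
    simp only [accelerationDensity, powerDensity, energyDensity, dotProduct_add, add_dotProduct,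
      dotProduct_smul, smul_dotProduct, smul_eq_mul, dotProduct_comm (S.dw₁ x t) (S.w₁ x t),
      dotProduct_comm (S.dw₂ x t) (S.w₂ x t)]
    field_simp
    ring
  rw [hsq]
  exact add_nonneg (mul_dotProduct_self_nonneg (by positivity) _)
    (mul_dotProduct_self_nonneg (by positivity) _)

variable (S)

lemma energy_nonneg (t : ℝ) : 0 ≤ S.E t :=
  setIntegral_nonneg S.hΩopen.measurableSet fun _ hx => energyDensity_nonneg hx

lemma dissipation_sq_le (ht : t ∈ Icc 0 S.T) :
    S.dissipation t ^ 2 ≤ S.E t * (2 * ∫ x in S.Ω, S.accelerationDensity x t) := by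
  have h := sq_integral_le_integral_mul_integral
    (S.integrableOn_of_mem S.accelerationDensity_mem ht)
    (S.integrableOn_of_mem S.powerDensity_mem ht)
    ((S.integrableOn_of_mem S.energyDensity_mem ht).const_mul 2)
    fun l => ae_restrict_of_forall_mem S.hΩopen.measurableSet fun x hx => quadratic_nonneg hx l
  rw [integral_powerDensity ht, integral_const_mul, neg_sq] at h
  have hE : S.E t = ∫ x in S.Ω, S.energyDensity x t := rfl
  rw [hE]
  linarith

theorem energy_eqOn_zero (hT : ∀ x ∈ S.Ω, S.w₁ x S.T = 0 ∧ S.w₂ x S.T = 0) :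
    EqOn S.E 0 (Icc 0 S.T) :=
  eqOn_zero_of_sq_deriv_le_mul (fun _ ht => S.hasDerivWithinAt_energy ht)
    (fun _ ht => (S.hasDerivWithinAt_dissipation ht).neg.congr_deriv (neg_neg _))
    (fun t _ => S.energy_nonneg t) (fun _ ht => (neg_sq _).trans_le (S.dissipation_sq_le ht))
    (setIntegral_eq_zero_of_forall_eq_zero fun x hx => (energyDensity_eq_zero_iff hx).2 (hT x hx))

theorem velocity_eq_zero_of_energy_eq_zero (ht : t ∈ Icc 0 S.T) (hE : S.E t = 0) :
    ∀ x ∈ S.Ω, S.w₁ x t = 0 ∧ S.w₂ x t = 0 := by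
  have hae := (setIntegral_eq_zero_iff_of_nonneg_ae
    (ae_restrict_of_forall_mem S.hΩopen.measurableSet fun x hx => energyDensity_nonneg hx)
    (S.integrableOn_of_mem S.energyDensity_mem ht)).1 hE
  exact fun x hx => (energyDensity_eq_zero_iff hx).1 (Measure.eqOn_open_of_ae_eq hae S.hΩopen
    (S.continuousOn_of_mem S.energyDensity_mem ht) continuousOn_const hx)

variable {S}

lemma dw₁_eq_zero (hw : ∀ x ∈ S.Ω, ∀ t ∈ Icc (0:ℝ) S.T, S.w₁ x t = 0) (hx : x ∈ S.Ω)
    (ht : t ∈ Icc 0 S.T) : S.dw₁ x t = 0 :=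
  (uniqueDiffOn_Icc S.hT t ht).eq_deriv _ (S.hdw₁ x hx t ht)
    ((hasDerivWithinAt_const t _ 0).congr (hw x hx) (hw x hx t ht))

lemma gq₁_eq_zero (hw : ∀ x ∈ S.Ω, ∀ t ∈ Icc (0:ℝ) S.T, S.w₁ x t = 0) (hx : x ∈ S.Ω)
    (ht : t ∈ Icc 0 S.T) : S.gq₁ x t = 0 := by
  simpa [hw x hx t ht, dw₁_eq_zero hw hx ht] using S.pde₁ x hx t ht

lemma q₁_eq_q₂ (hw : ∀ x ∈ S.Ω, ∀ t ∈ Icc (0:ℝ) S.T, S.w₁ x t = 0) (hx : x ∈ S.Ω)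
    (ht : t ∈ Icc 0 S.T) : S.q₁ x t = S.q₂ x t := by
  have hJ : S.Jw₁ x t = 0 :=
    (S.hJw₁ t ht x hx).unique ((hasFDerivAt_const 0 x).congr_of_eventuallyEq
      (Filter.eventually_of_mem (S.hΩopen.mem_nhds hx) fun y hy => hw y hy t ht))
  have hmass := S.mass₁ x hx t ht
  rw [show divOf (S.Jw₁ x t) = 0 by simp [hJ, divOf]] at hmass
  exact sub_eq_zero.1 ((mul_eq_zero.1 hmass.symm).resolve_left
    (neg_ne_zero.2 (div_pos S.hβ S.hμ).ne'))

lemma pressure_eq_const (hconn : IsPreconnected S.Ω)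
    (hw : ∀ x ∈ S.Ω, ∀ t ∈ Icc (0:ℝ) S.T, S.w₁ x t = 0) (ht : t ∈ Icc 0 S.T) :
    ∃ C, ∀ x ∈ S.Ω, S.q₁ x t = C ∧ S.q₂ x t = C := by
  have hq : ∀ x ∈ S.Ω, HasFDerivAt (fun y => S.q₁ y t) 0 x := fun x hx => by
    simpa [gq₁_eq_zero hw hx ht, gradCLM] using S.hgq₁ t ht x hx
  obtain ⟨C, hC⟩ := S.hΩopen.exists_is_const_of_fderiv_eq_zero hconn
    (fun x hx => (hq x hx).differentiableAt.differentiableWithinAt) fun x hx => (hq x hx).fderiv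
  exact ⟨C, fun x hx => ⟨hC x hx, q₁_eq_q₂ hw hx ht ▸ hC x hx⟩⟩

end DPP

end

/-- **Theorem 3.1 (backward-in-time uniqueness)**, phrased for the differences
`(w₁, w₂, q₁, q₂)` of two solutions of the DPP initial-boundary value problem sharing the
same body forces and boundary data.  If `Ω` is connected and the velocity differences
vanish at time `T`, then they vanish for all `t ∈ [0,T]`, and for each `t` the pressure
differences are a common constant `C(t)` throughout `Ω`. -/
theorem stmt_5 (S : DPP) (hconn : IsConnected S.Ω)
    (hterm : ∀ x ∈ S.Ω, S.w₁ x S.T = 0 ∧ S.w₂ x S.T = 0) :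
    (∀ x ∈ S.Ω, ∀ t ∈ Icc (0:ℝ) S.T, S.w₁ x t = 0 ∧ S.w₂ x t = 0) ∧
    (∀ t ∈ Icc (0:ℝ) S.T, ∃ C : ℝ, ∀ x ∈ S.Ω, S.q₁ x t = C ∧ S.q₂ x t = C) := by
  have hw : ∀ x ∈ S.Ω, ∀ t ∈ Icc (0:ℝ) S.T, S.w₁ x t = 0 ∧ S.w₂ x t = 0 := fun x hx t ht =>
    S.velocity_eq_zero_of_energy_eq_zero ht (S.energy_eqOn_zero hterm ht) x hx
  exact ⟨hw, fun t ht =>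
    S.pressure_eq_const hconn.isPreconnected (fun x hx s hs => (hw x hx s hs).1) ht⟩
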